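/- arXiv:2405.20907 — 2 statements merged into one kernel-verified Lean document; each statement's English description precedes it below -/
import Mathlib

section
/- Let X be a quasi-Banach function space over ℝ^d (with Lebesgue measure) and let Q ⊆ ℝ^d be a cube. Then the averaging operator T_Q is bounded from X to X if and only if 1_Q ∈ X and 1_Q ∈ X'; and in that case ‖T_Q‖_{X→X} = |Q|^{-1} ‖1_Q‖_X ‖1_Q‖_{X'}. -/
open MeasureTheory ENNReal Filter

noncomputable section

abbrev FnSp (d : ℕ) := (Fin d → ℝ) → ℝ

/-- A quasi-Banach function space over `ℝ^d`, encoded by a total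
`ℝ≥0∞`-valued quasinorm (with `enorm f = ∞` when `f` is not in the space). -/
structure QBFS (d : ℕ) where
  enorm : FnSp d → ℝ≥0∞
  K : ℝ≥0∞
  one_le_K : 1 ≤ K
  K_lt_top : K < ⊤
  enorm_congr : ∀ f g : FnSp d, f =ᵐ[volume] g → enorm f = enorm g
  enorm_smul : ∀ (c : ℝ) (f : FnSp d), enorm (c • f) = ENNReal.ofReal |c| * enorm f
  enorm_triangle : ∀ f g : FnSp d, enorm (f + g) ≤ K * (enorm f + enorm g)
  enorm_definite : ∀ f : FnSp d, AEMeasurable f volume → enorm f = 0 → f =ᵐ[volume] 0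
  ideal : ∀ f g : FnSp d, AEMeasurable f volume → AEMeasurable g volume →
    (∀ᵐ x ∂volume, |g x| ≤ |f x|) → enorm g ≤ enorm f
  saturation : ∀ E : Set (Fin d → ℝ), MeasurableSet E → 0 < volume E →
    ∃ F : Set (Fin d → ℝ), F ⊆ E ∧ MeasurableSet F ∧ 0 < volume F ∧
      enorm (F.indicator fun _ => (1 : ℝ)) < ⊤
  complete : ∀ f : ℕ → FnSp d,
    (∀ n, AEMeasurable (f n) volume ∧ enorm (f n) < ⊤) →
    (∀ ε : ℝ≥0∞, 0 < ε → ∃ N : ℕ, ∀ m ≥ N, ∀ n ≥ N, enorm (f m - f n) < ε) →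
    ∃ g : FnSp d, AEMeasurable g volume ∧ enorm g < ⊤ ∧
      Tendsto (fun n => enorm (f n - g)) atTop (nhds 0)

/-- Membership in the function space with quasinorm `N`. -/
def MemN {d : ℕ} (N : FnSp d → ℝ≥0∞) (f : FnSp d) : Prop :=
  AEMeasurable f volume ∧ N f < ⊤

def QBFS.Mem {d : ℕ} (X : QBFS d) (f : FnSp d) : Prop := MemN X.enorm f

/-- The Köthe dual norm of the quasinorm `N`. -/
def dualENormN {d : ℕ} (N : FnSp d → ℝ≥0∞) (g : FnSp d) : ℝ≥0∞ :=
  ⨆ f ∈ {f : FnSp d | AEMeasurable f volume ∧ N f = 1},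
    ∫⁻ x, ENNReal.ofReal |f x * g x|

/-- An axis-parallel cube in `ℝ^d`. -/
structure Cube (d : ℕ) where
  corner : Fin d → ℝ
  side : ℝ
  side_pos : 0 < side

/-- The (closed) cube as a subset of `ℝ^d`. -/
def Cube.set {d : ℕ} (Q : Cube d) : Set (Fin d → ℝ) :=
  Set.Icc Q.corner (fun i => Q.corner i + Q.side)

/-- The half-open realization of a cube (used for dyadic grids). -/
def Cube.hset {d : ℕ} (Q : Cube d) : Set (Fin d → ℝ) :=
  {x | ∀ i, Q.corner i ≤ x i ∧ x i < Q.corner i + Q.side}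

/-- The indicator function `1_Q` of a cube. -/
def cubeInd {d : ℕ} (Q : Cube d) : FnSp d := Q.set.indicator fun _ => (1 : ℝ)

/-- The average `⟨f⟩_{1,Q}`, valued in `ℝ≥0∞`. -/
def avg {d : ℕ} (Q : Cube d) (f : FnSp d) : ℝ≥0∞ :=
  (∫⁻ x in Q.set, ENNReal.ofReal |f x|) / volume Q.set

/-- The `L^r`-average `⟨f⟩_{r,Q}`, valued in `ℝ≥0∞`. -/
def avgR {d : ℕ} (r : ℝ) (Q : Cube d) (f : FnSp d) : ℝ≥0∞ :=
  ((∫⁻ x in Q.set, ENNReal.ofReal |f x| ^ r) / volume Q.set) ^ (1 / r)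

/-- The signed average `⟨f⟩_Q`. -/
def savg {d : ℕ} (Q : Cube d) (f : FnSp d) : ℝ :=
  (∫ x in Q.set, f x) / (volume Q.set).toReal

def PairwiseDisjointCubes {d : ℕ} (P : Set (Cube d)) : Prop :=
  P.Pairwise fun Q Q' => Disjoint Q.set Q'.set

/-- An `η`-sparse collection of cubes. -/
def IsSparse {d : ℕ} (η : ℝ) (S : Set (Cube d)) : Prop :=
  ∃ E : Cube d → Set (Fin d → ℝ),
    (∀ Q ∈ S, MeasurableSet (E Q) ∧ E Q ⊆ Q.set ∧
      ENNReal.ofReal η * volume Q.set ≤ volume (E Q)) ∧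
    S.Pairwise fun Q Q' => Disjoint (E Q) (E Q')

/-- `A_𝒫 f = ∑_{Q ∈ 𝒫} ⟨f⟩_{1,Q} 1_Q`, valued in `ℝ≥0∞`. -/
def avgSumE {d : ℕ} (P : Set (Cube d)) (f : FnSp d) : (Fin d → ℝ) → ℝ≥0∞ :=
  fun x => ∑' Q : P, Q.1.set.indicator (fun _ => avg Q.1 f) x

/-- The Hardy–Littlewood maximal function, valued in `ℝ≥0∞`. -/
def maximalE {d : ℕ} (f : FnSp d) : (Fin d → ℝ) → ℝ≥0∞ :=
  fun x => ⨆ (Q : Cube d) (_ : x ∈ Q.set), avg Q f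

def maximalFn {d : ℕ} (f : FnSp d) : FnSp d := fun x => (maximalE f x).toReal

/-- The weak quasinorm `sup_{λ>0} ‖λ 1_{F > λ}‖` of an `ℝ≥0∞`-valued function. -/
def weakENormE {d : ℕ} (N : FnSp d → ℝ≥0∞) (F : (Fin d → ℝ) → ℝ≥0∞) : ℝ≥0∞ :=
  ⨆ l ∈ Set.Ioi (0 : ℝ), N ({x | ENNReal.ofReal l < F x}.indicator fun _ => l)

def weakENorm {d : ℕ} (N : FnSp d → ℝ≥0∞) (g : FnSp d) : ℝ≥0∞ :=
  weakENormE N fun x => ENNReal.ofReal |g x|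

/-- Boundedness of the averaging operator `T_Q` with constant `C`. -/
def TQBound {d : ℕ} (N : FnSp d → ℝ≥0∞) (Q : Cube d) (C : ℝ≥0∞) : Prop :=
  ∀ f : FnSp d, MemN N f → avg Q f ≠ ⊤ ∧
    N (Q.set.indicator fun _ => (avg Q f).toReal) ≤ C * N f

/-- Weak boundedness of the averaging operator `T_Q` with constant `C`. -/
def TQWeakBound {d : ℕ} (N : FnSp d → ℝ≥0∞) (Q : Cube d) (C : ℝ≥0∞) : Prop :=
  ∀ f : FnSp d, MemN N f →
    weakENormE N (Q.set.indicator fun _ => avg Q f) ≤ C * N f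

/-- `X ∈ A_strong` with constant `C`. -/
def StrongBoundN {d : ℕ} (N : FnSp d → ℝ≥0∞) (C : ℝ≥0∞) : Prop :=
  ∀ P : Set (Cube d), PairwiseDisjointCubes P → ∀ f : FnSp d, MemN N f →
    (∀ᵐ x ∂volume, avgSumE P f x ≠ ⊤) ∧
    AEMeasurable (fun x => (avgSumE P f x).toReal) volume ∧
    N (fun x => (avgSumE P f x).toReal) ≤ C * N f

/-- Boundedness of a single sparse operator `A_𝒮` with constant `C`. -/
def SparseBoundOneN {d : ℕ} (N : FnSp d → ℝ≥0∞) (S : Set (Cube d)) (C : ℝ≥0∞) : Prop :=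
  ∀ f : FnSp d, MemN N f →
    (∀ᵐ x ∂volume, avgSumE S f x ≠ ⊤) ∧
    AEMeasurable (fun x => (avgSumE S f x).toReal) volume ∧
    N (fun x => (avgSumE S f x).toReal) ≤ C * N f

/-- `X ∈ A_sparse` with constant `C`. -/
def SparseBoundN {d : ℕ} (N : FnSp d → ℝ≥0∞) (C : ℝ≥0∞) : Prop :=
  ∀ S : Set (Cube d), IsSparse (1 / 2) S → SparseBoundOneN N S C

/-- Weak boundedness of a single sparse operator `A_𝒮` with constant `C`. -/
def SparseWeakBoundOneN {d : ℕ} (N : FnSp d → ℝ≥0∞) (S : Set (Cube d)) (C : ℝ≥0∞) : Prop :=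
  ∀ f : FnSp d, MemN N f → weakENormE N (avgSumE S f) ≤ C * N f

/-- `M : X → X` with constant `C`. -/
def MBoundN {d : ℕ} (N : FnSp d → ℝ≥0∞) (C : ℝ≥0∞) : Prop :=
  ∀ f : FnSp d, MemN N f →
    (∀ᵐ x ∂volume, maximalE f x ≠ ⊤) ∧
    AEMeasurable (maximalFn f) volume ∧
    N (maximalFn f) ≤ C * N f

/-- `M : X → X_weak` with constant `C`. -/
def MWeakBoundN {d : ℕ} (N : FnSp d → ℝ≥0∞) (C : ℝ≥0∞) : Prop :=
  ∀ f : FnSp d, MemN N f → weakENormE N (maximalE f) ≤ C * N f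

/-- The Muckenhoupt constant `[X]_A`. -/
def muckAConstN {d : ℕ} (N : FnSp d → ℝ≥0∞) : ℝ≥0∞ :=
  ⨆ Q : Cube d, N (cubeInd Q) * dualENormN N (cubeInd Q) / volume Q.set

/-- The Muckenhoupt condition `X ∈ A`. -/
def MuckAN {d : ℕ} (N : FnSp d → ℝ≥0∞) : Prop :=
  (∀ Q : Cube d, N (cubeInd Q) < ⊤ ∧ dualENormN N (cubeInd Q) < ⊤) ∧
    muckAConstN N < ⊤

/-- The Fatou property. -/
def HasFatou {d : ℕ} (X : QBFS d) : Prop :=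
  ∀ (f : ℕ → FnSp d) (g : FnSp d),
    (∀ n, AEMeasurable (f n) volume) → AEMeasurable g volume →
    (∀ n, ∀ᵐ x ∂volume, 0 ≤ f n x ∧ f n x ≤ f (n + 1) x) →
    (∀ᵐ x ∂volume, Tendsto (fun n => f n x) atTop (nhds (g x))) →
    (⨆ n, X.enorm (f n)) < ⊤ →
    X.enorm g = ⨆ n, X.enorm (f n)

/-- Order-continuity. -/
def OrderCont {d : ℕ} (X : QBFS d) : Prop :=
  ∀ f : ℕ → FnSp d, (∀ n, X.Mem (f n)) →
    (∀ n, ∀ᵐ x ∂volume, 0 ≤ f (n + 1) x ∧ f (n + 1) x ≤ f n x) →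
    (∀ᵐ x ∂volume, Tendsto (fun n => f n x) atTop (nhds 0)) →
    Tendsto (fun n => X.enorm (f n)) atTop (nhds 0)

/-- `X` is a Banach function space: the quasinorm is a norm. -/
def IsBanachFS {d : ℕ} (X : QBFS d) : Prop :=
  ∀ f g : FnSp d, X.enorm (f + g) ≤ X.enorm f + X.enorm g

/-- The `r`-concavification `X^r` of a quasinorm. -/
def concN {d : ℕ} (N : FnSp d → ℝ≥0∞) (r : ℝ) : FnSp d → ℝ≥0∞ :=
  fun f => N (fun x => |f x| ^ (1 / r)) ^ r

/-- Non-degeneracy of an operator `T` with constant `C`. -/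
def NonDeg {d : ℕ} (T : FnSp d → FnSp d) (C : ℝ) : Prop :=
  ∀ l : ℝ, 0 < l → ∃ xl : Fin d → ℝ, ∀ Q : Cube d, Q.side = l →
    ∀ f : FnSp d, (∀ x, 0 ≤ f x) → (∀ x, x ∉ Q.set → f x = 0) →
      IntegrableOn f Q.set volume →
      ∀ x : Fin d → ℝ,
        (x ∈ (fun y => y + xl) '' Q.set ∨ x ∈ (fun y => y - xl) '' Q.set) →
        C * ((∫ y in Q.set, f y) / (volume Q.set).toReal) ≤ |T f x|

/-- `p`-convexity of a quasinorm with constant `Mc`. -/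
def PConvexN {d : ℕ} (N : FnSp d → ℝ≥0∞) (p : ℝ) (Mc : ℝ≥0∞) : Prop :=
  ∀ (n : ℕ) (f : Fin n → FnSp d),
    N (fun x => (∑ i, |f i x| ^ p) ^ (1 / p)) ≤ Mc * (∑ i, N (f i) ^ p) ^ (1 / p)

/-- The `A₁` constant of a weight. -/
def A1ConstE {d : ℕ} (w : FnSp d) : ℝ≥0∞ :=
  ⨆ Q : Cube d, avg Q w *
    essSup (Q.set.indicator fun y => (ENNReal.ofReal (w y))⁻¹) volume

/-- The `A_p` constant of a weight (with the `A₁` constant when `p = 1`). -/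
def ApConstE {d : ℕ} (p : ℝ) (w : FnSp d) : ℝ≥0∞ :=
  if p = 1 then A1ConstE w
  else ⨆ Q : Cube d,
    ((∫⁻ x in Q.set, ENNReal.ofReal (w x) ^ p) / volume Q.set) ^ (1 / p) *
      ((∫⁻ x in Q.set, ENNReal.ofReal (w x) ^ (-(p / (p - 1)))) / volume Q.set) ^ (1 - 1 / p)

/-- `A_p`-regularity of the space with quasinorm `N`, with constants `C₁, C₂`. -/
def ApRegularN {d : ℕ} (N : FnSp d → ℝ≥0∞) (p : ℝ) (C₁ C₂ : ℝ≥0∞) : Prop :=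
  ∀ f : FnSp d, MemN N f → ∃ w : FnSp d, Measurable w ∧ (∀ x, 0 < w x) ∧
    (∀ᵐ x ∂volume, |f x| ≤ w x) ∧ N w ≤ C₁ * N f ∧ ApConstE p w ≤ C₂

/-- The quasinorm of the Calderón product `X · Y`. -/
def prodENorm {d : ℕ} (N₁ N₂ : FnSp d → ℝ≥0∞) (f : FnSp d) : ℝ≥0∞ :=
  ⨅ (h : FnSp d) (k : FnSp d) (_ : AEMeasurable h volume) (_ : AEMeasurable k volume)
    (_ : ∀ x, 0 ≤ h x) (_ : ∀ x, 0 ≤ k x)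
    (_ : ∀ᵐ x ∂volume, |f x| ≤ h x * k x), N₁ h * N₂ k

/-- Cubes with rational corners. -/
def IsRatCube {d : ℕ} (Q : Cube d) : Prop :=
  (∀ i, ∃ q : ℚ, Q.corner i = (q : ℝ)) ∧ ∃ q : ℚ, Q.side = (q : ℝ)

def RatCube (d : ℕ) := {Q : Cube d // IsRatCube Q}

/-- The pointwise `ℓ^r`-norm of a family indexed by the rational cubes
(`r = ⊤` gives the `ℓ^∞` norm). -/
def lNormE {d : ℕ} (r : ℝ≥0∞) (F : RatCube d → FnSp d) (x : Fin d → ℝ) : ℝ≥0∞ :=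
  if r = ⊤ then ⨆ Q : RatCube d, ENNReal.ofReal |F Q x|
  else (∑' Q : RatCube d, ENNReal.ofReal |F Q x| ^ r.toReal) ^ (1 / r.toReal)

/-- Membership in the mixed-norm space `X[ℓ^r]`. -/
def MemMixed {d : ℕ} (X : QBFS d) (r : ℝ≥0∞) (F : RatCube d → FnSp d) : Prop :=
  (∀ Q, AEMeasurable (F Q) volume) ∧
  (∀ᵐ x ∂volume, lNormE r F x ≠ ⊤) ∧
  AEMeasurable (fun x => (lNormE r F x).toReal) volume ∧
  X.enorm (fun x => (lNormE r F x).toReal) < ⊤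

/-- The mixed norm `‖F‖_{X[ℓ^r]}`. -/
def mixedENorm {d : ℕ} (X : QBFS d) (r : ℝ≥0∞) (F : RatCube d → FnSp d) : ℝ≥0∞ :=
  X.enorm (fun x => (lNormE r F x).toReal)

/-- The linearized maximal operator `𝓜((f_Q)_Q) = (⟨f_Q⟩_Q 1_Q)_Q`. -/
def mixM {d : ℕ} (F : RatCube d → FnSp d) : RatCube d → FnSp d :=
  fun Q => Q.1.set.indicator fun _ => savg Q.1 (F Q)

/-- Boundedness of `𝓜` on `X[ℓ^r]` with constant `C`. -/
def MixMBound {d : ℕ} (X : QBFS d) (r : ℝ≥0∞) (C : ℝ≥0∞) : Prop :=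
  ∀ F : RatCube d → FnSp d, MemMixed X r F →
    (∀ Q : RatCube d, IntegrableOn (F Q) Q.1.set volume) ∧
    MemMixed X r (mixM F) ∧
    mixedENorm X r (mixM F) ≤ C * mixedENorm X r F

/-- A dyadic grid (of half-open cubes). -/
def IsDyadicGrid {d : ℕ} (D : Set (Cube d)) : Prop :=
  (∀ Q ∈ D, ∃ k : ℤ, Q.side = (2 : ℝ) ^ k) ∧
  (∀ k : ℤ, ∀ x : Fin d → ℝ, ∃! Q : Cube d, Q ∈ D ∧ Q.side = (2 : ℝ) ^ k ∧ x ∈ Q.hset) ∧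
  (∀ Q ∈ D, ∀ Q' ∈ D, Q.hset ⊆ Q'.hset ∨ Q'.hset ⊆ Q.hset ∨ Disjoint Q.hset Q'.hset)

/-- The average over a half-open cube. -/
def avgH {d : ℕ} (Q : Cube d) (f : FnSp d) : ℝ≥0∞ :=
  (∫⁻ x in Q.hset, ENNReal.ofReal |f x|) / volume Q.hset

/-- `A_𝒮 f` for half-open cubes. -/
def avgSumHE {d : ℕ} (S : Set (Cube d)) (f : FnSp d) : (Fin d → ℝ) → ℝ≥0∞ :=
  fun x => ∑' Q : S, Q.1.hset.indicator (fun _ => avgH Q.1 f) x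

/-- `η`-sparseness for half-open cubes. -/
def IsSparseH {d : ℕ} (η : ℝ) (S : Set (Cube d)) : Prop :=
  ∃ E : Cube d → Set (Fin d → ℝ),
    (∀ Q ∈ S, MeasurableSet (E Q) ∧ E Q ⊆ Q.hset ∧
      ENNReal.ofReal η * volume Q.hset ≤ volume (E Q)) ∧
    S.Pairwise fun Q Q' => Disjoint (E Q) (E Q')

/-- The maximal cubes of `E` strictly contained in `Q`. -/
def childrenH {d : ℕ} (E : Set (Cube d)) (Q : Cube d) : Set (Cube d) :=
  {Q' | Q' ∈ E ∧ Q'.hset ⊂ Q.hset ∧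
    ¬∃ Q'' ∈ E, Q'.hset ⊂ Q''.hset ∧ Q''.hset ⊂ Q.hset}

/-- The dyadic maximal operator `M^𝒟`. -/
def maximalHD {d : ℕ} (D : Set (Cube d)) (f : FnSp d) (x : Fin d → ℝ) : ℝ≥0∞ :=
  ⨆ Q ∈ D, Q.hset.indicator (fun _ => avgH Q f) x

/-!
Hölder's inequality for the Köthe dual gives `∫_Q |f| ≤ ‖1_Q‖_{X'} ‖f‖_X`, and since
`‖T_Q f‖_X = ⟨f⟩_{1,Q} ‖1_Q‖_X` this bounds `T_Q` by `|Q|⁻¹ ‖1_Q‖_X ‖1_Q‖_{X'}`. Conversely, if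
`T_Q` is bounded by `C`, testing it on a set `F ⊆ Q` with `1_F ∈ X` (saturation) puts `1_Q` in `X`,
and testing it on the unit sphere of `X` gives `‖1_Q‖_X ‖1_Q‖_{X'} ≤ C |Q|`.
-/

section

variable {d : ℕ}

namespace Cube

lemma measurableSet_set (Q : Cube d) : MeasurableSet Q.set := measurableSet_Icc

lemma volume_set (Q : Cube d) : volume Q.set = ENNReal.ofReal Q.side ^ d := by
  rw [Cube.set, Real.volume_Icc_pi]
  simp [add_sub_cancel_left]

lemma volume_set_pos (Q : Cube d) : 0 < volume Q.set := by
  rw [volume_set]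
  exact ENNReal.pow_pos (ENNReal.ofReal_pos.2 Q.side_pos) d

lemma volume_set_ne_top (Q : Cube d) : volume Q.set ≠ ⊤ := by
  rw [volume_set]
  exact (ENNReal.pow_lt_top ENNReal.ofReal_lt_top).ne

end Cube

lemma measurable_cubeInd (Q : Cube d) : Measurable (cubeInd Q) :=
  measurable_const.indicator Q.measurableSet_set

lemma indicator_const_eq_smul_cubeInd (Q : Cube d) (r : ℝ) :
    (Q.set.indicator fun _ => r) = r • cubeInd Q := by
  funext x
  by_cases hx : x ∈ Q.set <;> simp [cubeInd, hx]

lemma lintegral_mul_cubeInd (Q : Cube d) (f : FnSp d) :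
    ∫⁻ x, ENNReal.ofReal |f x * cubeInd Q x| = ∫⁻ x in Q.set, ENNReal.ofReal |f x| := by
  rw [← lintegral_indicator Q.measurableSet_set]
  refine lintegral_congr fun x => ?_
  by_cases hx : x ∈ Q.set <;> simp [cubeInd, hx]

lemma lintegral_eq_avg_mul_volume (Q : Cube d) (f : FnSp d) :
    ∫⁻ x in Q.set, ENNReal.ofReal |f x| = avg Q f * volume Q.set := by
  rw [avg, ENNReal.div_mul_cancel Q.volume_set_pos.ne' Q.volume_set_ne_top]

lemma avg_indicator_one {F : Set (Fin d → ℝ)} (Q : Cube d) (hF : MeasurableSet F)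
    (hFQ : F ⊆ Q.set) : avg Q (F.indicator fun _ => 1) = volume F / volume Q.set := by
  have hF1 : (fun x => ENNReal.ofReal |F.indicator (fun _ => (1 : ℝ)) x|) = F.indicator 1 := by
    funext x
    by_cases hx : x ∈ F <;> simp [hx]
  rw [avg, hF1, lintegral_indicator_one hF, Measure.restrict_apply hF,
    Set.inter_eq_self_of_subset_left hFQ]

namespace QBFS

variable (X : QBFS d)

lemma enorm_indicator_const (Q : Cube d) (r : ℝ) :
    X.enorm (Q.set.indicator fun _ => r) = ENNReal.ofReal |r| * X.enorm (cubeInd Q) := by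
  rw [indicator_const_eq_smul_cubeInd, X.enorm_smul]

lemma enorm_indicator_avg (Q : Cube d) {f : FnSp d} (hf : avg Q f ≠ ⊤) :
    X.enorm (Q.set.indicator fun _ => (avg Q f).toReal) = avg Q f * X.enorm (cubeInd Q) := by
  rw [enorm_indicator_const, abs_of_nonneg ENNReal.toReal_nonneg, ENNReal.ofReal_toReal hf]

lemma enorm_cubeInd_ne_zero (Q : Cube d) : X.enorm (cubeInd Q) ≠ 0 := by
  intro h
  have hQ : Q.set ⊆ {x | cubeInd Q x ≠ 0} := fun x hx => by simp [cubeInd, hx]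
  have hnull : volume {x | cubeInd Q x ≠ 0} = 0 :=
    ae_iff.1 (X.enorm_definite _ (measurable_cubeInd Q).aemeasurable h)
  exact Q.volume_set_pos.ne' (measure_mono_null hQ hnull)

lemma lintegral_mul_le_dualENormN_mul {f : FnSp d} (hf : X.Mem f) (g : FnSp d) :
    ∫⁻ x, ENNReal.ofReal |f x * g x| ≤ dualENormN X.enorm g * X.enorm f := by
  obtain ⟨hfm, hf_top⟩ := hf
  rcases eq_or_ne (X.enorm f) 0 with h0 | h0
  · have hfg : (fun x => ENNReal.ofReal |f x * g x|) =ᵐ[volume] 0 := by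
      filter_upwards [X.enorm_definite f hfm h0] with x hx
      simp [hx]
    rw [lintegral_congr_ae hfg]
    simp
  set c : ℝ := (X.enorm f).toReal⁻¹
  have hc : ENNReal.ofReal c = (X.enorm f)⁻¹ := by
    rw [ENNReal.ofReal_inv_of_pos (ENNReal.toReal_pos h0 hf_top.ne),
      ENNReal.ofReal_toReal hf_top.ne]
  have hcf : X.enorm (c • f) = 1 := by
    rw [X.enorm_smul, abs_of_nonneg (by positivity), hc, ENNReal.inv_mul_cancel h0 hf_top.ne]
  have hcfg : ∫⁻ x, ENNReal.ofReal |(c • f) x * g x| ≤ dualENormN X.enorm g :=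
    le_biSup (fun f : FnSp d => ∫⁻ x, ENNReal.ofReal |f x * g x|) ⟨hfm.const_smul c, hcf⟩
  have hscale : ∫⁻ x, ENNReal.ofReal |(c • f) x * g x|
      = (X.enorm f)⁻¹ * ∫⁻ x, ENNReal.ofReal |f x * g x| := by
    rw [← hc, ← lintegral_const_mul' _ _ ENNReal.ofReal_ne_top]
    refine lintegral_congr fun x => ?_
    rw [Pi.smul_apply, smul_eq_mul, mul_assoc, abs_mul, abs_of_nonneg (by positivity),
      ENNReal.ofReal_mul (by positivity)]
  rw [hscale, ENNReal.inv_mul_le_iff h0 hf_top.ne] at hcfg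
  rwa [mul_comm]

lemma tqBound_of_dualENormN_lt_top (Q : Cube d) (hD : dualENormN X.enorm (cubeInd Q) < ⊤) :
    TQBound X.enorm Q
      (X.enorm (cubeInd Q) * dualENormN X.enorm (cubeInd Q) / volume Q.set) := by
  intro f hf
  have hint : ∫⁻ x in Q.set, ENNReal.ofReal |f x| ≤ dualENormN X.enorm (cubeInd Q) * X.enorm f :=
    lintegral_mul_cubeInd Q f ▸ X.lintegral_mul_le_dualENormN_mul hf (cubeInd Q)
  have havg : avg Q f ≤ dualENormN X.enorm (cubeInd Q) * X.enorm f / volume Q.set :=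
    ENNReal.div_le_div_right hint _
  have havg_top : avg Q f ≠ ⊤ :=
    ne_top_of_le_ne_top (ENNReal.div_ne_top (ENNReal.mul_lt_top hD hf.2).ne
      Q.volume_set_pos.ne') havg
  refine ⟨havg_top, ?_⟩
  calc X.enorm (Q.set.indicator fun _ => (avg Q f).toReal)
      = avg Q f * X.enorm (cubeInd Q) := X.enorm_indicator_avg Q havg_top
    _ ≤ dualENormN X.enorm (cubeInd Q) * X.enorm f / volume Q.set * X.enorm (cubeInd Q) := by
        gcongr
    _ = X.enorm (cubeInd Q) * dualENormN X.enorm (cubeInd Q) / volume Q.set * X.enorm f := by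
        simp only [div_eq_mul_inv]; ring

variable {X}

lemma enorm_mul_dualENormN_le_of_tqBound {Q : Cube d} {C : ℝ≥0∞} (hT : TQBound X.enorm Q C) :
    X.enorm (cubeInd Q) * dualENormN X.enorm (cubeInd Q) ≤ C * volume Q.set := by
  rw [mul_comm, dualENormN, ENNReal.iSup_mul]
  refine iSup_le fun f => ?_
  rw [ENNReal.iSup_mul]
  refine iSup_le fun ⟨hfm, hf1⟩ => ?_
  obtain ⟨havg_top, hTf⟩ := hT f ⟨hfm, hf1 ▸ ENNReal.one_lt_top⟩
  rw [X.enorm_indicator_avg Q havg_top, hf1, mul_one] at hTf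
  calc (∫⁻ x, ENNReal.ofReal |f x * cubeInd Q x|) * X.enorm (cubeInd Q)
      = avg Q f * X.enorm (cubeInd Q) * volume Q.set := by
        rw [lintegral_mul_cubeInd, lintegral_eq_avg_mul_volume]; ring
    _ ≤ C * volume Q.set := by gcongr

lemma mem_cubeInd_of_tqBound {Q : Cube d} {C : ℝ≥0∞} (hC : C < ⊤) (hT : TQBound X.enorm Q C) :
    X.Mem (cubeInd Q) := by
  obtain ⟨F, hFQ, hF, hF_pos, hF_top⟩ :=
    X.saturation Q.set Q.measurableSet_set Q.volume_set_pos
  have hFm : AEMeasurable (F.indicator fun _ => (1 : ℝ)) volume :=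
    (measurable_const.indicator hF).aemeasurable
  obtain ⟨havg_top, hTF⟩ := hT _ ⟨hFm, hF_top⟩
  rw [X.enorm_indicator_avg Q havg_top] at hTF
  have havg_pos : avg Q (F.indicator fun _ => 1) ≠ 0 := by
    rw [avg_indicator_one Q hF hFQ]
    exact (ENNReal.div_pos hF_pos.ne' Q.volume_set_ne_top).ne'
  refine ⟨(measurable_cubeInd Q).aemeasurable, lt_top_iff_ne_top.2 fun h_top => ?_⟩
  rw [h_top, ENNReal.mul_top havg_pos] at hTF
  exact (ENNReal.mul_lt_top hC hF_top).not_ge hTF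

lemma dualENormN_lt_top_of_tqBound {Q : Cube d} {C : ℝ≥0∞} (hC : C < ⊤)
    (hT : TQBound X.enorm Q C) : dualENormN X.enorm (cubeInd Q) < ⊤ := by
  refine lt_top_iff_ne_top.2 fun h_top => ?_
  have h := enorm_mul_dualENormN_le_of_tqBound hT
  rw [h_top, ENNReal.mul_top (X.enorm_cubeInd_ne_zero Q)] at h
  exact (ENNReal.mul_lt_top hC Q.volume_set_ne_top.lt_top).not_ge h

end QBFS

end

/-- `T_Q : X → X` is bounded iff `1_Q ∈ X` and `1_Q ∈ X'`,
and in that case `‖T_Q‖_{X→X} = |Q|⁻¹ ‖1_Q‖_X ‖1_Q‖_{X'}`. -/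
theorem statement0 {d : ℕ} (X : QBFS d) (Q : Cube d) :
    ((∃ C : ℝ≥0∞, C < ⊤ ∧ TQBound X.enorm Q C) ↔
      (X.Mem (cubeInd Q) ∧ MemN (dualENormN X.enorm) (cubeInd Q))) ∧
    ((X.Mem (cubeInd Q) ∧ MemN (dualENormN X.enorm) (cubeInd Q)) →
      sInf {C : ℝ≥0∞ | TQBound X.enorm Q C} =
        X.enorm (cubeInd Q) * dualENormN X.enorm (cubeInd Q) / volume Q.set) := by
  refine ⟨⟨fun ⟨C, hC, hT⟩ => ?_, fun ⟨h1, h2⟩ => ?_⟩, fun ⟨_, h2⟩ => ?_⟩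
  · exact ⟨QBFS.mem_cubeInd_of_tqBound hC hT,
      (measurable_cubeInd Q).aemeasurable, QBFS.dualENormN_lt_top_of_tqBound hC hT⟩
  · refine ⟨_, ?_, X.tqBound_of_dualENormN_lt_top Q h2.2⟩
    exact ENNReal.div_lt_top (ENNReal.mul_lt_top h1.2 h2.2).ne Q.volume_set_pos.ne'
  · refine le_antisymm (sInf_le (X.tqBound_of_dualENormN_lt_top Q h2.2)) (le_sInf fun C hT => ?_)
    exact ENNReal.div_le_of_le_mul (QBFS.enorm_mul_dualENormN_le_of_tqBound hT)
end
end

section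
/- Let X be a quasi-Banach function space over ℝ^d. The following are equivalent: (i) X ∈ A; (ii) the averaging operators T_Q are bounded X → X uniformly over all cubes Q; (iii) the averaging operators T_Q are bounded X → X_weak uniformly over all cubes Q. Moreover, in this case [X]_A = sup_Q ‖T_Q‖_{X→X} = sup_Q ‖T_Q‖_{X→X_weak}. -/
open MeasureTheory ENNReal Filter

noncomputable section

section StatementOneAux

variable {d : ℕ}

lemma cube_measurableSet (Q : Cube d) : MeasurableSet Q.set :=
  measurableSet_Icc

lemma cube_volume_eq (Q : Cube d) :
    volume Q.set = ENNReal.ofReal Q.side ^ (Finset.univ : Finset (Fin d)).card := by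
  rw [Cube.set, Real.volume_Icc_pi]
  simp only [add_sub_cancel_left]
  rw [Finset.prod_const]

lemma cube_volume_pos (Q : Cube d) : 0 < volume Q.set := by
  rw [cube_volume_eq]
  exact pos_iff_ne_zero.mpr (pow_ne_zero _ (ENNReal.ofReal_pos.mpr Q.side_pos).ne')

lemma cube_volume_lt_top (Q : Cube d) : volume Q.set < ⊤ := by
  rw [cube_volume_eq]
  exact ENNReal.pow_lt_top ENNReal.ofReal_lt_top

lemma QBFS.enorm_zero (X : QBFS d) : X.enorm 0 = 0 := by
  have h := X.enorm_smul 0 0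
  simpa using h

lemma enorm_indicator_const (X : QBFS d) (S : Set (Fin d → ℝ)) (c : ℝ) :
    X.enorm (S.indicator fun _ => c) =
      ENNReal.ofReal |c| * X.enorm (S.indicator fun _ => (1 : ℝ)) := by
  have h : (S.indicator fun _ => c) = c • (S.indicator fun _ => (1 : ℝ)) := by
    funext x
    by_cases hx : x ∈ S <;> simp [Set.indicator, hx]
  rw [h, X.enorm_smul]

lemma cubeInd_aemeasurable (Q : Cube d) : AEMeasurable (cubeInd Q) volume :=
  (measurable_const.indicator (cube_measurableSet Q)).aemeasurable

lemma enorm_cubeInd_ne_zero (X : QBFS d) (Q : Cube d) : X.enorm (cubeInd Q) ≠ 0 := by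
  intro h0
  have h := X.enorm_definite (cubeInd Q) (cubeInd_aemeasurable Q) h0
  have hz : volume {x | cubeInd Q x ≠ 0} = 0 := by
    simpa [Filter.EventuallyEq, ae_iff] using h
  have hsub : Q.set ⊆ {x | cubeInd Q x ≠ 0} := fun x hx => by
    simp [cubeInd, Set.indicator, hx]
  exact absurd (measure_mono_null hsub hz) (cube_volume_pos Q).ne'

lemma lint_mul_ind (Q : Cube d) (f : FnSp d) :
    (∫⁻ x, ENNReal.ofReal |f x * cubeInd Q x|) = ∫⁻ x in Q.set, ENNReal.ofReal |f x| := by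
  rw [← lintegral_indicator (cube_measurableSet Q)]
  congr 1
  funext x
  by_cases hx : x ∈ Q.set <;> simp [cubeInd, Set.indicator, hx]

lemma hoelder (X : QBFS d) (Q : Cube d) {f : FnSp d} (hf : MemN X.enorm f) :
    (∫⁻ x in Q.set, ENNReal.ofReal |f x|) ≤ X.enorm f * dualENormN X.enorm (cubeInd Q) := by
  have hdd : dualENormN X.enorm (cubeInd Q)
      = ⨆ h ∈ {h : FnSp d | AEMeasurable h volume ∧ X.enorm h = 1},
          ∫⁻ x, ENNReal.ofReal |h x * cubeInd Q x| := rfl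
  rcases eq_or_ne (X.enorm f) 0 with h0 | h0
  · have hz := X.enorm_definite f hf.1 h0
    have hz' : (fun x => ENNReal.ofReal |f x|) =ᵐ[volume] 0 := by
      filter_upwards [hz] with x hx
      simp [hx]
    calc (∫⁻ x in Q.set, ENNReal.ofReal |f x|)
        ≤ ∫⁻ x, ENNReal.ofReal |f x| := setLIntegral_le_lintegral _ _
      _ = 0 := by rw [lintegral_congr_ae hz']; simp
      _ ≤ _ := zero_le
  · set a := (X.enorm f).toReal with ha
    have hat : X.enorm f ≠ ⊤ := hf.2.ne
    have hapos : 0 < a := ENNReal.toReal_pos h0 hat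
    set g : FnSp d := a⁻¹ • f with hg
    have hgm : AEMeasurable g volume := hf.1.const_smul _
    have hg1 : X.enorm g = 1 := by
      rw [hg, X.enorm_smul, abs_inv, abs_of_pos hapos,
        ENNReal.ofReal_inv_of_pos hapos, ha, ENNReal.ofReal_toReal hat]
      exact ENNReal.inv_mul_cancel h0 hat
    have hmem : g ∈ {h : FnSp d | AEMeasurable h volume ∧ X.enorm h = 1} := ⟨hgm, hg1⟩
    have hle : (∫⁻ x, ENNReal.ofReal |g x * cubeInd Q x|) ≤ dualENormN X.enorm (cubeInd Q) := by
      rw [hdd]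
      exact le_biSup (fun h => ∫⁻ x, ENNReal.ofReal |h x * cubeInd Q x|) hmem
    rw [lint_mul_ind] at hle
    have hfg : ∀ x, ENNReal.ofReal |f x| = ENNReal.ofReal a * ENNReal.ofReal |g x| := by
      intro x
      rw [← ENNReal.ofReal_mul hapos.le]
      congr 1
      rw [hg]
      simp only [Pi.smul_apply, smul_eq_mul, abs_mul, abs_inv, abs_of_pos hapos]
      field_simp
    calc (∫⁻ x in Q.set, ENNReal.ofReal |f x|)
        = ENNReal.ofReal a * ∫⁻ x in Q.set, ENNReal.ofReal |g x| := by
          simp_rw [hfg]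
          rw [lintegral_const_mul' _ _ ENNReal.ofReal_ne_top]
      _ ≤ X.enorm f * dualENormN X.enorm (cubeInd Q) := by
          rw [ha, ENNReal.ofReal_toReal hat]
          exact mul_le_mul_right hle _

lemma weak_set_eq (Q : Cube d) (a : ℝ≥0∞) (l : ℝ) :
    {x | ENNReal.ofReal l < Q.set.indicator (fun _ => a) x} =
      if ENNReal.ofReal l < a then Q.set else ∅ := by
  ext x
  simp only [Set.mem_setOf_eq]
  by_cases hx : x ∈ Q.set
  · rw [Set.indicator_of_mem hx]
    split_ifs with h <;> simp [hx, h]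
  · rw [Set.indicator_of_notMem hx]
    split_ifs with h <;> simp [hx]

lemma weak_ge (X : QBFS d) (Q : Cube d) (a : ℝ≥0∞) {l : ℝ} (hl : 0 < l)
    (hla : ENNReal.ofReal l < a) :
    ENNReal.ofReal l * X.enorm (cubeInd Q) ≤
      weakENormE X.enorm (Q.set.indicator fun _ => a) := by
  simp only [weakENormE]
  have heq : ENNReal.ofReal l * X.enorm (cubeInd Q) =
      X.enorm (({x | ENNReal.ofReal l < (Q.set.indicator fun _ => a) x}).indicator
        fun _ => l) := by
    rw [weak_set_eq, if_pos hla, enorm_indicator_const, abs_of_pos hl]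
    rfl
  rw [heq]
  exact le_biSup (fun l : ℝ => X.enorm
    (({x | ENNReal.ofReal l < (Q.set.indicator fun _ => a) x}).indicator fun _ => l))
    (Set.mem_Ioi.mpr hl)

lemma mul_le_of_forall_ofReal_lt {a b C : ℝ≥0∞}
    (h : ∀ l : ℝ, 0 < l → ENNReal.ofReal l < a → ENNReal.ofReal l * b ≤ C) :
    a * b ≤ C := by
  rcases eq_or_ne a 0 with rfl | ha
  · simp
  have hs : sSup (Set.Iio a) = a := by
    refine le_antisymm (sSup_le fun x hx => hx.le) (le_of_forall_lt fun c hc => ?_)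
    obtain ⟨m, h1, h2⟩ := exists_between hc
    exact lt_of_lt_of_le h1 (le_sSup h2)
  have key : ∀ x ∈ Set.Iio a, x * b ≤ C := by
    intro x hx
    simp only [Set.mem_Iio] at hx
    obtain ⟨l, hl0, hxl, hla⟩ : ∃ l : ℝ, 0 < l ∧ x ≤ ENNReal.ofReal l ∧ ENNReal.ofReal l < a := by
      rcases eq_or_ne a ⊤ with rfl | hat
      · refine ⟨x.toReal + 1, by positivity, ?_, by simp⟩
        calc x = ENNReal.ofReal x.toReal := (ENNReal.ofReal_toReal hx.ne).symm
          _ ≤ _ := ENNReal.ofReal_le_ofReal (by linarith [ENNReal.toReal_nonneg (a := x)])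
      · have hxt : x ≠ ⊤ := (hx.trans_le le_top).ne
        have hxa : x.toReal < a.toReal := (ENNReal.toReal_lt_toReal hxt hat).mpr hx
        have hap : 0 < a.toReal := lt_of_le_of_lt ENNReal.toReal_nonneg hxa
        have hx0 : 0 ≤ x.toReal := ENNReal.toReal_nonneg
        refine ⟨(x.toReal + a.toReal) / 2, by linarith, ?_, ?_⟩
        · calc x = ENNReal.ofReal x.toReal := (ENNReal.ofReal_toReal hxt).symm
            _ ≤ _ := ENNReal.ofReal_le_ofReal (by linarith)
        · have h2 := (ENNReal.ofReal_lt_ofReal_iff hap).mpr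
            (show (x.toReal + a.toReal) / 2 < a.toReal by linarith)
          rwa [ENNReal.ofReal_toReal hat] at h2
    exact le_trans (mul_le_mul_left hxl b) (h l hl0 hla)
  rw [← hs, sSup_eq_iSup', ENNReal.iSup_mul]
  exact iSup_le fun x => key x x.2

lemma keyQ (X : QBFS d) (Q : Cube d) {C : ℝ≥0∞} (hw : TQWeakBound X.enorm Q C) :
    X.enorm (cubeInd Q) * dualENormN X.enorm (cubeInd Q) ≤ C * volume Q.set := by
  have hdd : dualENormN X.enorm (cubeInd Q)
      = ⨆ h ∈ {h : FnSp d | AEMeasurable h volume ∧ X.enorm h = 1},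
          ∫⁻ x, ENNReal.ofReal |h x * cubeInd Q x| := rfl
  rw [hdd, ENNReal.mul_iSup]
  refine iSup_le fun f => ?_
  rw [ENNReal.mul_iSup]
  refine iSup_le fun hf => ?_
  have hmem : MemN X.enorm f := ⟨hf.1, by rw [hf.2]; exact one_lt_top⟩
  have hweak := hw f hmem
  rw [hf.2, mul_one] at hweak
  rw [lint_mul_ind]
  have havg : (∫⁻ x in Q.set, ENNReal.ofReal |f x|) = avg Q f * volume Q.set :=
    (ENNReal.div_mul_cancel (cube_volume_pos Q).ne' (cube_volume_lt_top Q).ne).symm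
  rw [havg]
  have hmain : avg Q f * X.enorm (cubeInd Q) ≤ C :=
    mul_le_of_forall_ofReal_lt fun l hl hla => (weak_ge X Q (avg Q f) hl hla).trans hweak
  calc X.enorm (cubeInd Q) * (avg Q f * volume Q.set)
      = avg Q f * X.enorm (cubeInd Q) * volume Q.set := by ring
    _ ≤ C * volume Q.set := mul_le_mul_left hmain _

lemma muckA_le_of_weak (X : QBFS d) {C : ℝ≥0∞}
    (hw : ∀ Q : Cube d, TQWeakBound X.enorm Q C) :
    muckAConstN X.enorm ≤ C := by
  simp only [muckAConstN]
  refine iSup_le fun Q => ?_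
  rw [ENNReal.div_le_iff (cube_volume_pos Q).ne' (cube_volume_lt_top Q).ne]
  exact keyQ X Q (hw Q)

lemma muckA_TQBound (X : QBFS d) (hA : MuckAN X.enorm) (Q : Cube d) :
    TQBound X.enorm Q (muckAConstN X.enorm) := by
  intro f hf
  have hQ2 := (hA.1 Q).2
  have hv0 := (cube_volume_pos Q).ne'
  have havg : avg Q f ≤ X.enorm f * dualENormN X.enorm (cubeInd Q) / volume Q.set :=
    ENNReal.div_le_div_right (hoelder X Q hf) _
  have havgt : avg Q f ≠ ⊤ :=
    ne_top_of_le_ne_top (ENNReal.div_lt_top (ENNReal.mul_ne_top hf.2.ne hQ2.ne) hv0).ne havg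
  refine ⟨havgt, ?_⟩
  have h1 : X.enorm (Q.set.indicator fun _ => (avg Q f).toReal)
      = avg Q f * X.enorm (cubeInd Q) := by
    rw [enorm_indicator_const, abs_of_nonneg ENNReal.toReal_nonneg,
      ENNReal.ofReal_toReal havgt]
    rfl
  rw [h1]
  calc avg Q f * X.enorm (cubeInd Q)
      ≤ X.enorm f * dualENormN X.enorm (cubeInd Q) / volume Q.set * X.enorm (cubeInd Q) :=
        mul_le_mul_left havg _
    _ = X.enorm f * (X.enorm (cubeInd Q) * dualENormN X.enorm (cubeInd Q) / volume Q.set) := by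
        rw [div_eq_mul_inv, div_eq_mul_inv]; ring
    _ ≤ X.enorm f * muckAConstN X.enorm := by
        refine mul_le_mul_right ?_ _
        simp only [muckAConstN]
        exact le_iSup (fun Q => X.enorm (cubeInd Q) * dualENormN X.enorm (cubeInd Q)
          / volume Q.set) Q
    _ = muckAConstN X.enorm * X.enorm f := mul_comm _ _

lemma TQBound_weak (X : QBFS d) (Q : Cube d) {C : ℝ≥0∞} (h : TQBound X.enorm Q C) :
    TQWeakBound X.enorm Q C := by
  intro f hf
  obtain ⟨havgt, hN⟩ := h f hf
  simp only [weakENormE]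
  refine iSup₂_le fun l hl => ?_
  simp only [Set.mem_Ioi] at hl
  rw [weak_set_eq]
  split_ifs with hla
  · rw [enorm_indicator_const, abs_of_pos hl]
    calc ENNReal.ofReal l * X.enorm (Q.set.indicator fun _ => (1 : ℝ))
        ≤ avg Q f * X.enorm (Q.set.indicator fun _ => (1 : ℝ)) :=
          mul_le_mul_left hla.le _
      _ = X.enorm (Q.set.indicator fun _ => (avg Q f).toReal) := by
          rw [enorm_indicator_const X Q.set ((avg Q f).toReal),
            abs_of_nonneg ENNReal.toReal_nonneg, ENNReal.ofReal_toReal havgt]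
      _ ≤ C * X.enorm f := hN
  · have hz : (∅ : Set (Fin d → ℝ)).indicator (fun _ => l) = (0 : FnSp d) :=
      Set.indicator_empty _
    rw [hz, X.enorm_zero]
    exact zero_le

lemma weak_muckA (X : QBFS d) {C : ℝ≥0∞} (hC : C < ⊤)
    (hw : ∀ Q : Cube d, TQWeakBound X.enorm Q C) : MuckAN X.enorm := by
  have hfin : ∀ Q : Cube d, X.enorm (cubeInd Q) < ⊤ := by
    intro Q
    obtain ⟨F, hFQ, hFm, hFpos, hFfin⟩ :=
      X.saturation Q.set (cube_measurableSet Q) (cube_volume_pos Q)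
    set f : FnSp d := F.indicator fun _ => (1 : ℝ) with hfdef
    have hfm : AEMeasurable f volume := (measurable_const.indicator hFm).aemeasurable
    have hmem : MemN X.enorm f := ⟨hfm, hFfin⟩
    have hint : (∫⁻ x in Q.set, ENNReal.ofReal |f x|) = volume F := by
      have hpt : ∀ x, ENNReal.ofReal |f x| = F.indicator (fun _ => (1 : ℝ≥0∞)) x := by
        intro x
        by_cases hx : x ∈ F <;> simp [hfdef, Set.indicator, hx]
      simp_rw [hpt]
      rw [lintegral_indicator hFm, setLIntegral_one, Measure.restrict_apply hFm,
        Set.inter_eq_self_of_subset_left hFQ]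
    have havg0 : avg Q f ≠ 0 := by
      simp only [avg, hint]
      exact (ENNReal.div_pos hFpos.ne' (cube_volume_lt_top Q).ne).ne'
    have havgt : avg Q f ≠ ⊤ := by
      simp only [avg, hint]
      exact (ENNReal.div_lt_top
        (lt_of_le_of_lt (measure_mono hFQ) (cube_volume_lt_top Q)).ne
        (cube_volume_pos Q).ne').ne
    have htRpos : 0 < (avg Q f).toReal := ENNReal.toReal_pos havg0 havgt
    have hl : 0 < (avg Q f).toReal / 2 := by linarith
    have hla : ENNReal.ofReal ((avg Q f).toReal / 2) < avg Q f := by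
      conv_rhs => rw [← ENNReal.ofReal_toReal havgt]
      exact (ENNReal.ofReal_lt_ofReal_iff htRpos).mpr (by linarith)
    have h := (weak_ge X Q (avg Q f) hl hla).trans (hw Q f hmem)
    have hCf : C * X.enorm f < ⊤ := ENNReal.mul_lt_top hC hFfin
    have hlt := h.trans_lt hCf
    by_contra hNt
    rw [not_lt, top_le_iff] at hNt
    rw [hNt, ENNReal.mul_top (ENNReal.ofReal_pos.mpr hl).ne'] at hlt
    exact absurd hlt (lt_irrefl ⊤)
  constructor
  · intro Q
    refine ⟨hfin Q, ?_⟩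
    have hk := keyQ X Q (hw Q)
    have hN0 := enorm_cubeInd_ne_zero X Q
    by_contra hdt
    rw [not_lt, top_le_iff] at hdt
    rw [hdt, ENNReal.mul_top hN0] at hk
    exact absurd (hk.trans_lt (ENNReal.mul_lt_top hC (cube_volume_lt_top Q)))
      (lt_irrefl ⊤)
  · exact lt_of_le_of_lt (muckA_le_of_weak X hw) hC

end StatementOneAux


/-- `X ∈ A` iff the operators `T_Q` are uniformly bounded `X → X`
iff they are uniformly bounded `X → X_weak`; moreover in that case
`[X]_A = sup_Q ‖T_Q‖_{X→X} = sup_Q ‖T_Q‖_{X→X_weak}`. -/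
theorem statement1 {d : ℕ} (X : QBFS d) :
    ((MuckAN X.enorm ↔ ∃ C : ℝ≥0∞, C < ⊤ ∧ ∀ Q : Cube d, TQBound X.enorm Q C) ∧
      (MuckAN X.enorm ↔ ∃ C : ℝ≥0∞, C < ⊤ ∧ ∀ Q : Cube d, TQWeakBound X.enorm Q C)) ∧
    (MuckAN X.enorm →
      muckAConstN X.enorm = sInf {C : ℝ≥0∞ | ∀ Q : Cube d, TQBound X.enorm Q C} ∧
      muckAConstN X.enorm = sInf {C : ℝ≥0∞ | ∀ Q : Cube d, TQWeakBound X.enorm Q C}) := by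
  refine ⟨⟨⟨fun hA => ⟨muckAConstN X.enorm, hA.2, fun Q => muckA_TQBound X hA Q⟩,
    fun ⟨C, hC, hQ⟩ => weak_muckA X hC (fun Q => TQBound_weak X Q (hQ Q))⟩,
    ⟨fun hA => ⟨muckAConstN X.enorm, hA.2,
      fun Q => TQBound_weak X Q (muckA_TQBound X hA Q)⟩,
    fun ⟨C, hC, hQ⟩ => weak_muckA X hC hQ⟩⟩, fun hA => ⟨?_, ?_⟩⟩
  · refine le_antisymm
      (le_sInf fun C hC => muckA_le_of_weak X fun Q => TQBound_weak X Q (hC Q))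
      (sInf_le fun Q => muckA_TQBound X hA Q)
  · refine le_antisymm (le_sInf fun C hC => muckA_le_of_weak X hC)
      (sInf_le fun Q => TQBound_weak X Q (muckA_TQBound X hA Q))
end
end
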